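/- Let T be a bounded linear operator on a Banach space X such that T has an eigenvalue λ with |λ| > 1. Then the Bowen topological entropy of T is at least log|λ| > 0. -/

import Mathlib

open Filter Topology

section Defs
variable {Y : Type*} [PseudoMetricSpace Y]

/-- A finite set `E` is `(n, ε)`-separated for the map `f`. -/
def IsSep (f : Y → Y) (n : ℕ) (ε : ℝ) (E : Finset Y) : Prop :=
  ∀ x ∈ E, ∀ y ∈ E, x ≠ y → ∃ i < n, ε < dist (f^[i] x) (f^[i] y)

/-- Maximal cardinality of an `(n, ε)`-separated subset of `K`. -/
noncomputable def sepNum (f : Y → Y) (K : Set Y) (n : ℕ) (ε : ℝ) : ℕ :=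
  sSup {m : ℕ | ∃ E : Finset Y, ↑E ⊆ K ∧ IsSep f n ε E ∧ E.card = m}

/-- Bowen topological entropy of a (uniformly continuous) map on a metric space. -/
noncomputable def entBowen (f : Y → Y) : EReal :=
  ⨆ (K : Set Y) (_ : IsCompact K) (ε : ℝ) (_ : 0 < ε),
    limsup (fun n : ℕ => ((Real.log (sepNum f K n ε) / n : ℝ) : EReal)) atTop
end Defs

/-!
On the compact disc `{a • x : ‖a‖ ≤ 1}` the map `T` multiplies the coefficient `a` by `μ`, so
after `n` steps the `N + 1` points `(j / N) • x`, `N = ⌊‖μ‖ ^ n⌋₊`, are `‖x‖` apart. Hence more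
than `‖μ‖ ^ n` points of the disc are `(n + 1, ‖x‖ / 2)`-separated, which forces entropy at least
`log ‖μ‖`. That `sepNum` is a genuine maximum comes from total boundedness of a compact set in
the Bowen metric `max_{i < n} dist (f^[i] ·) (f^[i] ·)`.
-/

open Metric

lemma TotallyBounded.exists_card_le_of_pairwise {Z : Type*} [PseudoMetricSpace Z] {S : Set Z}
    (hS : TotallyBounded S) {ε : ℝ} (hε : 0 < ε) :
    ∃ M : ℕ, ∀ E : Finset Z, ↑E ⊆ S → (E : Set Z).Pairwise (fun a b => ε < dist a b) →
      E.card ≤ M := by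
  obtain ⟨t, -, ht, hcover⟩ := finite_approx_of_totallyBounded hS (ε / 2) (half_pos hε)
  refine ⟨ht.toFinset.card, fun E hES hE => ?_⟩
  have hcenter : ∀ e ∈ E, ∃ c ∈ t, dist e c < ε / 2 := fun e he => by
    simpa using hcover (hES he)
  choose! c hct hc using hcenter
  refine Finset.card_le_card_of_injOn c (fun e he => ht.mem_toFinset.2 (hct e he)) ?_
  intro e he e' he' hcc
  by_contra hne
  have hfar := hE he he' hne
  have hnear := hc e' he'
  rw [← hcc] at hnear
  linarith [hc e he, dist_triangle_right e e' (c e)]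

section Bowen

variable {Y : Type*} [PseudoMetricSpace Y] {f : Y → Y} {K : Set Y} {n : ℕ} {ε : ℝ}

lemma IsSep.pairwise_lt_dist_orbit {E : Finset Y} (hE : IsSep f n ε E) :
    (E : Set Y).Pairwise fun a b => ε < dist (fun i : Fin n => f^[i] a) (fun i => f^[i] b) :=
  fun a ha b hb hab =>
    let ⟨i, hi, hlt⟩ := hE a ha b hb hab
    hlt.trans_le (dist_le_pi_dist (fun i : Fin n => f^[i] a) (fun i => f^[i] b) ⟨i, hi⟩)

lemma bddAbove_card_isSep (hf : Continuous f) (hK : IsCompact K) (hε : 0 < ε) :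
    BddAbove {m : ℕ | ∃ E : Finset Y, ↑E ⊆ K ∧ IsSep f n ε E ∧ E.card = m} := by
  classical
  set orbit : Y → Fin n → Y := fun y i => f^[i] y
  have horbit : Continuous orbit := continuous_pi fun i => hf.iterate _
  obtain ⟨M, hM⟩ := (hK.image horbit).totallyBounded.exists_card_le_of_pairwise hε
  refine ⟨M, ?_⟩
  rintro _ ⟨E, hEK, hE, rfl⟩
  have hinj : Set.InjOn orbit E := fun a ha b hb hab => by
    by_contra hne
    have hlt : ε < dist (orbit a) (orbit b) := hE.pairwise_lt_dist_orbit ha hb hne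
    rw [hab, dist_self] at hlt
    linarith
  rw [← Finset.card_image_of_injOn hinj]
  refine hM _ ?_ ?_
  · rw [Finset.coe_image]
    exact Set.image_mono hEK
  · rw [Finset.coe_image]
    exact (Set.InjOn.pairwise_image hinj).2 hE.pairwise_lt_dist_orbit

lemma card_le_sepNum (hf : Continuous f) (hK : IsCompact K) (hε : 0 < ε) {ι : Type*}
    (s : Finset ι) (φ : ι → Y) (hφK : ∀ j ∈ s, φ j ∈ K)
    (hφ : (s : Set ι).Pairwise fun j k => ∃ i < n, ε < dist (f^[i] (φ j)) (f^[i] (φ k))) :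
    s.card ≤ sepNum f K n ε := by
  classical
  have hinj : Set.InjOn φ s := fun j hj k hk hjk => by
    by_contra hne
    obtain ⟨i, -, hlt⟩ := hφ hj hk hne
    rw [hjk, dist_self] at hlt
    linarith
  rw [← Finset.card_image_of_injOn hinj]
  refine le_csSup (bddAbove_card_isSep hf hK hε) ⟨_, ?_, ?_, rfl⟩
  · simpa [Set.subset_def] using hφK
  · simp only [IsSep, Finset.mem_image]
    rintro _ ⟨j, hj, rfl⟩ _ ⟨k, hk, rfl⟩ hne
    exact hφ hj hk fun h => hne (h ▸ rfl)

lemma log_le_entBowen (hK : IsCompact K) (hε : 0 < ε) {c C : ℝ} (hc : 0 < c)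
    (h : ∀ᶠ n in atTop, c ^ n ≤ C * sepNum f K n ε) :
    (Real.log c : EReal) ≤ entBowen f := by
  have hlim : Tendsto (fun n : ℕ => ((Real.log c - Real.log C / n : ℝ) : EReal)) atTop
      (𝓝 (Real.log c)) :=
    EReal.tendsto_coe.2 <| by
      simpa using tendsto_const_nhds.sub (tendsto_const_div_atTop_nhds_zero_nat (Real.log C))
  have hle : ∀ᶠ n : ℕ in atTop, ((Real.log c - Real.log C / n : ℝ) : EReal) ≤
      ((Real.log (sepNum f K n ε) / n : ℝ) : EReal) := by
    filter_upwards [h, eventually_gt_atTop 0] with n hn hn0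
    obtain ⟨hC, hsep⟩ := mul_ne_zero_iff.1 ((pow_pos hc n).trans_le hn).ne'
    have hlog : n * Real.log c ≤ Real.log C + Real.log (sepNum f K n ε) := by
      rw [← Real.log_pow, ← Real.log_mul hC hsep]
      exact Real.log_le_log (pow_pos hc n) hn
    rw [EReal.coe_le_coe_iff, sub_le_iff_le_add, ← add_div, le_div_iff₀ (by positivity)]
    linarith
  calc (Real.log c : EReal) = limsup (fun n : ℕ => ((Real.log c - Real.log C / n : ℝ) : EReal))
        atTop := hlim.limsup_eq.symm
    _ ≤ limsup (fun n : ℕ => ((Real.log (sepNum f K n ε) / n : ℝ) : EReal)) atTop :=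
        limsup_le_limsup hle
    _ ≤ entBowen f := le_iSup₂_of_le K hK (le_iSup₂_of_le ε hε le_rfl)

end Bowen

section Eigenvector

lemma iterate_smul_of_apply_eq_smul {R M F : Type*} [CommSemiring R] [AddCommMonoid M]
    [Module R M] [FunLike F M M] [LinearMapClass F R M M] {T : F} {μ : R} {x : M}
    (heig : T x = μ • x) (a : R) (n : ℕ) : (⇑T)^[n] (a • x) = (a * μ ^ n) • x := by
  induction n with
  | zero => simp
  | succ n ih =>
    rw [Function.iterate_succ_apply', ih, map_smul, heig, smul_smul, pow_succ, mul_assoc]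

variable {𝕜 X : Type*}

lemma dist_iterate_smul_of_apply_eq_smul [NormedField 𝕜] [SeminormedAddCommGroup X]
    [NormedSpace 𝕜 X] {T : X →L[𝕜] X} {μ : 𝕜} {x : X} (heig : T x = μ • x) (a b : 𝕜) (n : ℕ) :
    dist ((⇑T)^[n] (a • x)) ((⇑T)^[n] (b • x)) = ‖a - b‖ * ‖μ‖ ^ n * ‖x‖ := by
  rw [iterate_smul_of_apply_eq_smul heig, iterate_smul_of_apply_eq_smul heig, dist_eq_norm,
    ← sub_smul, ← sub_mul, norm_smul, norm_mul, norm_pow]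

lemma pow_lt_sepNum_of_apply_eq_smul [RCLike 𝕜] [NormedAddCommGroup X] [NormedSpace 𝕜 X]
    {T : X →L[𝕜] X} {μ : 𝕜} (hμ : 1 ≤ ‖μ‖) {x : X} (hx : x ≠ 0) (heig : T x = μ • x) (n : ℕ) :
    ‖μ‖ ^ n < sepNum T ((· • x) '' closedBall (0 : 𝕜) 1) (n + 1) (‖x‖ / 2) := by
  set N := ⌊‖μ‖ ^ n⌋₊
  have hN : (0 : ℝ) < N := Nat.cast_pos.2 (Nat.floor_pos.2 (one_le_pow₀ hμ))
  have hNμ : (N : ℝ) ≤ ‖μ‖ ^ n := Nat.floor_le (by positivity)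
  have hx0 : 0 < ‖x‖ := norm_pos_iff.2 hx
  have hmem : ∀ j ∈ Finset.range (N + 1),
      ((j : 𝕜) / N) • x ∈ (· • x) '' closedBall (0 : 𝕜) 1 := by
    intro j hj
    refine ⟨(j : 𝕜) / N, ?_, rfl⟩
    rw [mem_closedBall_zero_iff, norm_div, RCLike.norm_natCast, RCLike.norm_natCast,
      div_le_one hN, Nat.cast_le]
    exact Nat.lt_succ_iff.1 (Finset.mem_range.1 hj)
  have hsep : (Finset.range (N + 1) : Set ℕ).Pairwise fun j k => ∃ i < n + 1,
      ‖x‖ / 2 < dist ((⇑T)^[i] (((j : 𝕜) / N) • x)) ((⇑T)^[i] (((k : 𝕜) / N) • x)) := by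
    intro j _ k _ hjk
    refine ⟨n, n.lt_succ_self, ?_⟩
    have hjk1 : (1 : ℝ) ≤ |(j : ℝ) - k| := by
      exact_mod_cast Int.one_le_abs (sub_ne_zero.2 (Nat.cast_injective.ne hjk))
    have hnorm : ‖(j : 𝕜) / N - (k : 𝕜) / N‖ = |(j : ℝ) - k| / N := by
      have hcast : (j : 𝕜) - k = (((j : ℝ) - k : ℝ) : 𝕜) := by simp
      rw [← sub_div, norm_div, hcast, RCLike.norm_ofReal, RCLike.norm_natCast]
    rw [dist_iterate_smul_of_apply_eq_smul heig, hnorm]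
    calc ‖x‖ / 2 < 1 * ‖x‖ := by linarith
      _ ≤ |(j : ℝ) - k| / N * ‖μ‖ ^ n * ‖x‖ := by
        gcongr
        rw [div_mul_eq_mul_div, one_le_div hN]
        exact one_mul (N : ℝ) ▸ mul_le_mul hjk1 hNμ hN.le (abs_nonneg _)
  calc ‖μ‖ ^ n < N + 1 := Nat.lt_floor_add_one _
    _ = (Finset.range (N + 1)).card := by simp
    _ ≤ _ := Nat.cast_le.2 <| card_le_sepNum T.continuous
        ((isCompact_closedBall 0 1).image (by fun_prop))
        (half_pos hx0) _ _ hmem hsep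

end Eigenvector

theorem entropy_ge_log_of_eigenvalue_general
    {X : Type*} [NormedAddCommGroup X] [NormedSpace ℂ X]
    (T : X →L[ℂ] X) (μ : ℂ) (hμ : 1 < ‖μ‖)
    (x : X) (hx : x ≠ 0) (heig : T x = μ • x) :
    (0 : EReal) < ((Real.log ‖μ‖ : ℝ) : EReal) ∧
      ((Real.log ‖μ‖ : ℝ) : EReal) ≤ entBowen (fun y => T y) := by
  refine ⟨by exact_mod_cast Real.log_pos hμ, ?_⟩
  have hgrowth : ∀ᶠ n in atTop,
      ‖μ‖ ^ n ≤ ‖μ‖ * sepNum T ((· • x) '' closedBall (0 : ℂ) 1) n (‖x‖ / 2) := by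
    filter_upwards [eventually_ge_atTop 1] with n hn
    obtain ⟨m, rfl⟩ := Nat.exists_eq_add_of_le' hn
    rw [pow_succ']
    exact mul_le_mul_of_nonneg_left (pow_lt_sepNum_of_apply_eq_smul hμ.le hx heig m).le
      (norm_nonneg μ)
  exact log_le_entBowen ((isCompact_closedBall 0 1).image (by fun_prop))
    (half_pos (norm_pos_iff.2 hx)) (by positivity) hgrowth

theorem entropy_ge_log_of_eigenvalue
    {X : Type*} [NormedAddCommGroup X] [NormedSpace ℂ X] [CompleteSpace X]
    (T : X →L[ℂ] X) (μ : ℂ) (hμ : 1 < ‖μ‖)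
    (x : X) (hx : x ≠ 0) (heig : T x = μ • x) :
    (0 : EReal) < ((Real.log ‖μ‖ : ℝ) : EReal) ∧
      ((Real.log ‖μ‖ : ℝ) : EReal) ≤ entBowen (fun y => T y) :=
  entropy_ge_log_of_eigenvalue_general T μ hμ x hx heig
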